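/- arXiv:2509.16756 — 4 statements merged into one kernel-verified Lean document; each statement's English description precedes it below -/
import Mathlib

section
/- Let q, p be time-dependent probability distributions on a finite set X evolving under Kolmogorov forward equations d/dt q_t(y) = ∑_x q_t(x) Ř_t(x,y) and d/dt p_t(y) = ∑_x p_t(x) R̂_t(x,y) with valid rate matrices Ř_t, R̂_t (off-diagonal entries nonnegative, rows summing to zero), and suppose all probabilities remain strictly positive. Then d/dt KL(q_t ∥ p_t) ≤ E_{x∼q_t}[ ∑_{y≠x} ( R̂_t(x,y) − Ř_t(x,y) + Ř_t(x,y)·log( Ř_t(x,y)/R̂_t(x,y) ) ) ]. -/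
/-!
Differentiating, `d/dt KL(q ∥ p) = ∑ q̇ log (q / p) - ∑ ṗ (q / p)`, since `∑ q̇ = 0`. Because the
rows of a rate matrix sum to zero, `∑ₓ (μR)ₓ fₓ = ∑_z μ_z ∑ₓ R_zx (fₓ - f_z)`; applied to both
pairings this writes the derivative as `∑_z q_z ∑_{x ≠ z} (Ř_zx log w - R̂_zx (w - 1))` with
`w = (qₓ/pₓ) / (q_z/p_z)`. Each summand is at most `R̂ - Ř + Ř log (Ř / R̂)`, which is
`log y ≤ y - 1` at `y = R̂ w / Ř`.
-/

open Real Finset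

theorem Real.mul_log_sub_mul_sub_one_le {a b w : ℝ} (ha : 0 ≤ a) (hb : 0 < b) (hw : 0 < w) :
    a * log w - b * (w - 1) ≤ b - a + a * log (a / b) := by
  rcases ha.eq_or_lt with rfl | ha
  · nlinarith
  have h := log_le_sub_one_of_pos (show 0 < b * w / a by positivity)
  rw [log_div (by positivity) ha.ne', log_mul hb.ne' hw.ne'] at h
  have : a * (log b + log w - log a) ≤ b * w - a :=
    calc _ ≤ a * (b * w / a - 1) := mul_le_mul_of_nonneg_left h ha.le
      _ = b * w - a := by field_simp
  rw [log_div ha.ne' hb.ne']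
  linarith

theorem HasDerivAt.mul_log_div {f g : ℝ → ℝ} {f' g' t : ℝ} (hf : HasDerivAt f f' t)
    (hg : HasDerivAt g g' t) (hf0 : f t ≠ 0) (hg0 : g t ≠ 0) :
    HasDerivAt (fun u => f u * Real.log (f u / g u))
      (f' * Real.log (f t / g t) + f' - f t * g' / g t) t := by
  refine (hf.fun_mul ((hf.fun_div hg hg0).log (div_ne_zero hf0 hg0))).congr_deriv ?_
  field_simp
  ring

theorem sum_forward_mul_eq {X : Type*} [Fintype X] {R : X → X → ℝ}
    (hR : ∀ z, ∑ x, R z x = 0) (μ f : X → ℝ) :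
    ∑ x, (∑ z, μ z * R z x) * f x = ∑ z, μ z * ∑ x, R z x * (f x - f z) := by
  have hdiag : ∀ z, ∑ x, R z x * (f x - f z) = ∑ x, R z x * f x := fun z => by
    simp only [mul_sub, sum_sub_distrib, ← sum_mul, hR, zero_mul, sub_zero]
  simp only [hdiag, sum_mul, mul_sum]
  rw [sum_comm]
  simp only [mul_assoc]

theorem sum_deriv_mul_log_div_eq {X : Type*} [Fintype X] {Rq Rp : X → X → ℝ}
    (hRq : ∀ z, ∑ x, Rq z x = 0) (hRp : ∀ z, ∑ x, Rp z x = 0) {μ ν : X → ℝ}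
    (hμ : ∀ x, μ x ≠ 0) (hν : ∀ x, ν x ≠ 0) :
    ∑ x, ((∑ z, μ z * Rq z x) * log (μ x / ν x) + ∑ z, μ z * Rq z x
        - μ x * (∑ z, ν z * Rp z x) / ν x) =
      ∑ z, μ z * ∑ x, (Rq z x * log ((μ x / ν x) / (μ z / ν z))
        - Rp z x * ((μ x / ν x) / (μ z / ν z) - 1)) := by
  set r := fun x => μ x / ν x with hr_def
  have hr : ∀ x, r x ≠ 0 := fun x => div_ne_zero (hμ x) (hν x)
  have hsplit : ∑ x, ((∑ z, μ z * Rq z x) * log (r x) + ∑ z, μ z * Rq z x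
        - μ x * (∑ z, ν z * Rp z x) / ν x) =
      ∑ x, (∑ z, μ z * Rq z x) * log (r x) + ∑ x, (∑ z, μ z * Rq z x) * 1
        - ∑ x, (∑ z, ν z * Rp z x) * r x := by
    rw [← sum_add_distrib, ← sum_sub_distrib]
    exact sum_congr rfl fun x _ => by simp only [hr_def]; ring
  rw [hsplit, sum_forward_mul_eq hRq, sum_forward_mul_eq hRq, sum_forward_mul_eq hRp]
  simp only [sub_self, mul_zero, sum_const_zero, add_zero, ← sum_sub_distrib]
  refine sum_congr rfl fun z _ => ?_
  rw [mul_sum, mul_sum, mul_sum, ← sum_sub_distrib]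
  refine sum_congr rfl fun x _ => ?_
  rw [log_div (hr x) (hr z)]
  have := hμ z
  have := hν z
  simp only [hr_def]
  field_simp

theorem kl_differential_inequality_general {X : Type*} [Fintype X] [DecidableEq X]
    (q p : ℝ → X → ℝ) (Rq Rp : ℝ → X → X → ℝ) (t : ℝ)
    (hqpos : ∀ u x, 0 < q u x) (hppos : ∀ u x, 0 < p u x)
    (hRqoff : ∀ u x y, x ≠ y → 0 < Rq u x y) (hRpoff : ∀ u x y, x ≠ y → 0 < Rp u x y)
    (hRqrow : ∀ u x, ∑ y, Rq u x y = 0) (hRprow : ∀ u x, ∑ y, Rp u x y = 0)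
    (hqode : ∀ u y, HasDerivAt (fun v => q v y) (∑ x, q u x * Rq u x y) u)
    (hpode : ∀ u y, HasDerivAt (fun v => p v y) (∑ x, p u x * Rp u x y) u) :
    deriv (fun u => ∑ x, q u x * Real.log (q u x / p u x)) t ≤
      ∑ x, q t x * ∑ y ∈ Finset.univ.filter (fun y => y ≠ x),
        (Rp t x y - Rq t x y + Rq t x y * Real.log (Rq t x y / Rp t x y)) := by
  have hq : ∀ x, q t x ≠ 0 := fun x => (hqpos t x).ne'
  have hp : ∀ x, p t x ≠ 0 := fun x => (hppos t x).ne'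
  have hD := HasDerivAt.fun_sum (u := univ) fun x _ =>
    (hqode t x).mul_log_div (hpode t x) (hq x) (hp x)
  rw [hD.deriv, sum_deriv_mul_log_div_eq (hRqrow t) (hRprow t) hq hp]
  refine sum_le_sum fun z _ => mul_le_mul_of_nonneg_left ?_ (hqpos t z).le
  rw [← sum_filter_of_ne (p := (· ≠ z)) fun x _ hx => ?offDiag]
  case offDiag =>
    rintro rfl
    simp [div_self (div_ne_zero (hq x) (hp x))] at hx
  refine sum_le_sum fun x hx => Real.mul_log_sub_mul_sub_one_le ?_ ?_ ?_
  · exact (hRqoff t z x (mem_filter.1 hx).2.symm).le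
  · exact hRpoff t z x (mem_filter.1 hx).2.symm
  · exact div_pos (div_pos (hqpos t x) (hppos t x)) (div_pos (hqpos t z) (hppos t z))

/-- Key differential inequality (Theorem 1): if `q_t` and `p_t` evolve under Kolmogorov
forward equations with valid rate matrices `Rq` and `Rp` and all probabilities stay
strictly positive, then the derivative of `KL(q_t ∥ p_t)` is bounded by the expected
Bregman divergence between the rate rows. -/
theorem kl_differential_inequality {X : Type*} [Fintype X] [DecidableEq X]
    (q p : ℝ → X → ℝ) (Rq Rp : ℝ → X → X → ℝ) (t : ℝ)
    (hqpos : ∀ u x, 0 < q u x) (hppos : ∀ u x, 0 < p u x)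
    (hqsum : ∀ u, ∑ x, q u x = 1) (hpsum : ∀ u, ∑ x, p u x = 1)
    (hRqoff : ∀ u x y, x ≠ y → 0 < Rq u x y) (hRpoff : ∀ u x y, x ≠ y → 0 < Rp u x y)
    (hRqrow : ∀ u x, ∑ y, Rq u x y = 0) (hRprow : ∀ u x, ∑ y, Rp u x y = 0)
    (hqode : ∀ u y, HasDerivAt (fun v => q v y) (∑ x, q u x * Rq u x y) u)
    (hpode : ∀ u y, HasDerivAt (fun v => p v y) (∑ x, p u x * Rp u x y) u) :
    deriv (fun u => ∑ x, q u x * Real.log (q u x / p u x)) t ≤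
      ∑ x, q t x * ∑ y ∈ Finset.univ.filter (fun y => y ≠ x),
        (Rp t x y - Rq t x y + Rq t x y * Real.log (Rq t x y / Rp t x y)) :=
  kl_differential_inequality_general q p Rq Rp t hqpos hppos hRqoff hRpoff hRqrow hRprow hqode hpode
end

section
/- Let Ř_t and R̂_t be rate matrices on a finite set X with off-diagonal entries positive and rows summing to zero, and let q_t be a probability distribution on X. Define g_t(x) = ∑_{y≠x}( R̂_t(x,y) − Ř_t(x,y) + Ř_t(x,y) log(Ř_t(x,y)/R̂_t(x,y)) ). If the off-diagonal entries of both matrices lie in an interval [m, M] with 0 < m ≤ M, then |g_t(x) − g_s(x)| ≤ (1 + log M + log(1/m) + 1)·∑_{y≠x} |Ř_t(x,y) − Ř_s(x,y)| whenever R̂_t(x,·) = R̂_s(x,·) off the diagonal. -/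
open Real Finset

/-! For a fixed sampling rate `p`, each summand `a ↦ p - a + a log (a / p)` of `g` has derivative
`log (a / p)`, which on `[m, M]` is bounded in absolute value by `log M - log m`. By the mean value
theorem every summand is therefore `(log M - log m)`-Lipschitz in the true rate, and summing over
`y ≠ x` gives the bound, with room to spare in the constant. -/

lemma abs_log_sub_log_le_of_mem_Icc {m M a b : ℝ} (hm : 0 < m)
    (ha : a ∈ Set.Icc m M) (hb : b ∈ Set.Icc m M) :
    |log a - log b| ≤ log M - log m := by
  have hlog_le {u v : ℝ} (hu : u ∈ Set.Icc m M) (hv : v ∈ Set.Icc m M) :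
      log u - log v ≤ log M - log m :=
    sub_le_sub (log_le_log (hm.trans_le hu.1) hu.2) (log_le_log hm hv.1)
  exact abs_sub_le_iff.mpr ⟨hlog_le ha hb, hlog_le hb ha⟩

lemma hasDerivAt_sub_add_mul_log_div {p a : ℝ} (hp : p ≠ 0) (ha : a ≠ 0) :
    HasDerivAt (fun z => p - z + z * log (z / p)) (log (a / p)) a := by
  have hlog := ((hasDerivAt_id' a).div_const p).log (div_ne_zero ha hp)
  refine (((hasDerivAt_const a p).sub (hasDerivAt_id' a)).add
    ((hasDerivAt_id' a).mul hlog)).congr_deriv ?_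
  field_simp
  ring

lemma abs_sub_add_mul_log_div_sub_le {m M p a b : ℝ} (hm : 0 < m) (hp : p ∈ Set.Icc m M)
    (ha : a ∈ Set.Icc m M) (hb : b ∈ Set.Icc m M) :
    |(p - a + a * log (a / p)) - (p - b + b * log (b / p))| ≤ (log M - log m) * |a - b| := by
  have hp0 : 0 < p := hm.trans_le hp.1
  have hderiv : ∀ z ∈ Set.Icc m M, HasDerivWithinAt (fun z => p - z + z * log (z / p))
      (log (z / p)) (Set.Icc m M) z := fun z hz =>
    (hasDerivAt_sub_add_mul_log_div hp0.ne' (hm.trans_le hz.1).ne').hasDerivWithinAt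
  have hbound : ∀ z ∈ Set.Icc m M, ‖log (z / p)‖ ≤ log M - log m := fun z hz => by
    rw [norm_eq_abs, log_div (hm.trans_le hz.1).ne' hp0.ne']
    exact abs_log_sub_log_le_of_mem_Icc hm hz hp
  simpa only [norm_eq_abs] using
    (convex_Icc m M).norm_image_sub_le_of_norm_hasDerivWithin_le hderiv hbound hb ha

theorem bregman_time_difference_bound_general {X : Type*} [Fintype X] [DecidableEq X]
    (Rq Rp : ℝ → X → X → ℝ) (s t : ℝ) (x : X) (m M : ℝ)
    (hm : 0 < m)
    (hRq : ∀ u ∈ ({s, t} : Set ℝ), ∀ y, y ≠ x → Rq u x y ∈ Set.Icc m M)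
    (hRp : ∀ u ∈ ({s, t} : Set ℝ), ∀ y, y ≠ x → Rp u x y ∈ Set.Icc m M)
    (hconst : ∀ y, y ≠ x → Rp t x y = Rp s x y) :
    |(∑ y ∈ Finset.univ.filter (fun y => y ≠ x),
        (Rp t x y - Rq t x y + Rq t x y * Real.log (Rq t x y / Rp t x y))) -
      (∑ y ∈ Finset.univ.filter (fun y => y ≠ x),
        (Rp s x y - Rq s x y + Rq s x y * Real.log (Rq s x y / Rp s x y)))| ≤
      (1 + Real.log M + Real.log (1 / m) + 1) *
        ∑ y ∈ Finset.univ.filter (fun y => y ≠ x), |Rq t x y - Rq s x y| := by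
  have hs : s ∈ ({s, t} : Set ℝ) := Or.inl rfl
  have ht : t ∈ ({s, t} : Set ℝ) := Or.inr rfl
  have hconstant : log M - log m ≤ 1 + log M + log (1 / m) + 1 := by
    rw [one_div, log_inv]
    linarith
  rw [← sum_sub_distrib, mul_sum]
  refine (abs_sum_le_sum_abs _ _).trans (sum_le_sum fun y hy => ?_)
  have hyx : y ≠ x := (mem_filter.mp hy).2
  rw [hconst y hyx]
  exact (abs_sub_add_mul_log_div_sub_le hm (hRp s hs y hyx) (hRq t ht y hyx)
    (hRq s hs y hyx)).trans (mul_le_mul_of_nonneg_right hconstant (abs_nonneg _))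

/-- Lemma 4 (dominant discretization error): the change of the Bregman term
`g_t(x) = ∑_{y≠x}(R̂_t(x,y) − Ř_t(x,y) + Ř_t(x,y) log(Ř_t(x,y)/R̂_t(x,y)))` in time is
controlled by the L¹ change of the true reverse rate row, with a logarithmic factor,
when the sampling rate row is the same at times `s` and `t` and all off-diagonal
rates lie in `[m, M]`. -/
theorem bregman_time_difference_bound {X : Type*} [Fintype X] [DecidableEq X]
    (Rq Rp : ℝ → X → X → ℝ) (s t : ℝ) (x : X) (m M : ℝ)
    (hm : 0 < m) (hmM : m ≤ M)
    (hRq : ∀ u ∈ ({s, t} : Set ℝ), ∀ y, y ≠ x → Rq u x y ∈ Set.Icc m M)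
    (hRp : ∀ u ∈ ({s, t} : Set ℝ), ∀ y, y ≠ x → Rp u x y ∈ Set.Icc m M)
    (hconst : ∀ y, y ≠ x → Rp t x y = Rp s x y) :
    |(∑ y ∈ Finset.univ.filter (fun y => y ≠ x),
        (Rp t x y - Rq t x y + Rq t x y * Real.log (Rq t x y / Rp t x y))) -
      (∑ y ∈ Finset.univ.filter (fun y => y ≠ x),
        (Rp s x y - Rq s x y + Rq s x y * Real.log (Rq s x y / Rp s x y)))| ≤
      (1 + Real.log M + Real.log (1 / m) + 1) *
        ∑ y ∈ Finset.univ.filter (fun y => y ≠ x), |Rq t x y - Rq s x y| :=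
  bregman_time_difference_bound_general Rq Rp s t x m M hm hRq hRp hconst
end

section
/- Let {t_k}_{k=0}^{N} satisfy t_0 = 0, t_N = T − δ, and t_{k+1} − t_k ≤ κ·min{1, T − t_k} for each k, with 0 < δ < 1 < T and 0 < κ < 1/2. Then ∑_{k=0}^{N−1} max{1, (T − t_{k+1})^{−2}}·(t_{k+1} − t_k)^2 ≤ C·κ·(T + log(1/δ)) for a universal constant C. -/
open Real Finset

/-- Step-size summation bound: for an increasing schedule with `t_0 = 0`,
`t_N = T − δ` and `t_{k+1} − t_k ≤ κ·min{1, T − t_k}`, we have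
`∑_k max{1,(T − t_{k+1})⁻²}·(t_{k+1} − t_k)² ≤ C·κ·(T + log(1/δ))` for a universal
constant `C`. -/
theorem stepsize_sum_bound :
    ∃ C : ℝ, 0 < C ∧
      ∀ (N : ℕ) (t : ℕ → ℝ) (T δ κ : ℝ),
        0 < δ → δ < 1 → 1 < T → 0 < κ → κ < 1 / 2 →
        t 0 = 0 → t N = T - δ →
        (∀ k < N, t k ≤ t (k + 1)) →
        (∀ k < N, t (k + 1) - t k ≤ κ * min 1 (T - t k)) →
        ∑ k ∈ Finset.range N,
            max 1 ((T - t (k + 1))⁻¹ ^ 2) * (t (k + 1) - t k) ^ 2 ≤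
          C * κ * (T + Real.log (1 / δ)) := by
  refine ⟨5, by norm_num, ?_⟩
  intro N t T δ κ hδ hδ1 hT hκ hκ2 ht0 htN hmono hstep
  have mono : ∀ i j, i ≤ j → j ≤ N → t i ≤ t j := by
    intro i j hij hjN
    induction j with
    | zero => simp [Nat.le_zero.mp hij]
    | succ j ih =>
      rcases Nat.eq_or_lt_of_le hij with h | h
      · rw [h]
      · exact le_trans (ih (Nat.lt_succ_iff.mp h) (by omega))
          (hmono j (by omega))
  have hδb : ∀ k, k ≤ N → δ ≤ T - t k := by
    intro k hk
    have := mono k N hk le_rfl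
    rw [htN] at this
    linarith
  have key : ∀ k ∈ Finset.range N,
      max 1 ((T - t (k + 1))⁻¹ ^ 2) * (t (k + 1) - t k) ^ 2 ≤
        κ * (t (k + 1) - t k) +
          4 * κ * (Real.log (T - t k) - Real.log (T - t (k + 1))) := by
    intro k hk
    rw [Finset.mem_range] at hk
    set a := T - t k with ha
    set b := T - t (k + 1) with hb
    set h := t (k + 1) - t k with hh
    have hbδ : δ ≤ b := hδb (k + 1) (by omega)
    have haδ : δ ≤ a := hδb k (by omega)
    have hb0 : 0 < b := lt_of_lt_of_le hδ hbδ
    have ha0 : 0 < a := lt_of_lt_of_le hδ haδ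
    have hh0 : 0 ≤ h := by have := hmono k hk; simp [hh]; linarith
    have hhmin : h ≤ κ * min 1 a := hstep k hk
    have hha : h ≤ κ * a :=
      le_trans hhmin (mul_le_mul_of_nonneg_left (min_le_right 1 a) hκ.le)
    have hhκ : h ≤ κ := by
      calc h ≤ κ * min 1 a := hhmin
        _ ≤ κ * 1 := mul_le_mul_of_nonneg_left (min_le_left 1 a) hκ.le
        _ = κ := mul_one κ
    have hab : a = b + h := by simp only [ha, hb, hh]; ring
    have ha2b : a ≤ 2 * b := by nlinarith
    have hlog : h / a ≤ Real.log a - Real.log b := by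
      have h1 : Real.log (b / a) ≤ b / a - 1 :=
        Real.log_le_sub_one_of_pos (by positivity)
      rw [Real.log_div hb0.ne' ha0.ne'] at h1
      have h2 : b / a - 1 = -(h / a) := by field_simp; linarith
      rw [h2] at h1
      linarith
    have hhb : h / b ≤ 2 * (Real.log a - Real.log b) := by
      have h2 : h / b ≤ 2 * (h / a) := by
        rw [div_le_iff₀ hb0, show 2 * (h / a) * b = 2 * h * b / a by ring,
          le_div_iff₀ ha0]
        nlinarith
      linarith
    have hhb2 : h / b ≤ 2 * κ := by
      rw [div_le_iff₀ hb0]; nlinarith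
    have hmax : max 1 (b⁻¹ ^ 2) ≤ 1 + b⁻¹ ^ 2 :=
      max_le (le_add_of_nonneg_right (by positivity))
        (le_add_of_nonneg_left zero_le_one)
    have hx0 : 0 ≤ h / b := div_nonneg hh0 hb0.le
    calc max 1 (b⁻¹ ^ 2) * h ^ 2 ≤ (1 + b⁻¹ ^ 2) * h ^ 2 :=
          mul_le_mul_of_nonneg_right hmax (by positivity)
      _ = h ^ 2 + (h / b) ^ 2 := by field_simp
      _ ≤ κ * h + 4 * κ * (Real.log a - Real.log b) := by
          have e1 : h ^ 2 ≤ κ * h := by nlinarith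
          have e2a : (h / b) * (h / b) ≤ (2 * κ) * (h / b) :=
            mul_le_mul_of_nonneg_right hhb2 hx0
          have e2b : (2 * κ) * (h / b) ≤
              (2 * κ) * (2 * (Real.log a - Real.log b)) :=
            mul_le_mul_of_nonneg_left hhb (by linarith)
          have e2 : (h / b) ^ 2 ≤ 4 * κ * (Real.log a - Real.log b) := by
            have e2c : (2 * κ) * (2 * (Real.log a - Real.log b)) =
                4 * κ * (Real.log a - Real.log b) := by ring
            rw [sq]; linarith
          exact add_le_add e1 e2
  calc ∑ k ∈ Finset.range N,
        max 1 ((T - t (k + 1))⁻¹ ^ 2) * (t (k + 1) - t k) ^ 2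
      ≤ ∑ k ∈ Finset.range N,
          (κ * (t (k + 1) - t k) +
            4 * κ * (Real.log (T - t k) - Real.log (T - t (k + 1)))) :=
        Finset.sum_le_sum key
    _ = κ * (t N - t 0) +
        4 * κ * (Real.log (T - t 0) - Real.log (T - t N)) := by
        rw [Finset.sum_add_distrib, ← Finset.mul_sum, ← Finset.mul_sum,
          Finset.sum_range_sub (fun i => t i),
          Finset.sum_range_sub' (fun i => Real.log (T - t i))]
    _ = κ * (T - δ) + 4 * κ * (Real.log T - Real.log δ) := by
        rw [ht0, htN, sub_zero, show T - (T - δ) = δ by ring]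
        ring
    _ ≤ 5 * κ * (T + Real.log (1 / δ)) := by
        rw [one_div, Real.log_inv]
        have hlogT : Real.log T ≤ T - 1 :=
          Real.log_le_sub_one_of_pos (by linarith)
        have hlogδ : Real.log δ ≤ 0 := Real.log_nonpos hδ.le hδ1.le
        have p1 : 0 ≤ κ * (T - 1 - Real.log T) := mul_nonneg hκ.le (by linarith)
        have p2 : 0 ≤ κ * (-Real.log δ) := mul_nonneg hκ.le (by linarith)
        have p3 : 0 ≤ κ * δ := mul_nonneg hκ.le hδ.le
        nlinarith [p1, p2, p3]
end

section
/- Let q_{t|0} and q_{s|0} be transition kernels of a CTMC on a finite set X with rate matrices R_u (u ∈ [s,t]) whose rows have entries bounded in absolute value by a constant L (so |d/du q_{u|0}(x|x_0)| ≤ ∑_{x̃} q_{u|0}(x̃|x_0)|R_u(x̃,x)|). Then for any distribution q_0 on X and any x with q_t(x) > 0, (1/q_t(x))·E_{x_0∼q_0} |q_{t|0}(x|x_0) − q_{s|0}(x|x_0)| ≤ (t−s)·sup_{u∈[s,t]} ∑_{x̃} (q_u(x̃)/q_t(x)) |R_u(x̃,x)|. -/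
open Finset

/-!
Pair each `x₀` with the sign `σ(x₀)` of `q_{t|0}(x|x₀) − q_{s|0}(x|x₀)`. The weighted
sum `∑ q₀ |q_{t|0} − q_{s|0}|` is then the increment of the single differentiable function
`u ↦ ∑ q₀ σ q_{u|0}(x|·)`, whose derivative, by the forward equation, is bounded by
`∑_{x̃} q_u(x̃) |R_u(x̃,x)| ≤ q_t(x) · sup`, so the mean value inequality concludes.
-/

theorem sum_mul_abs_sub_le_of_hasDerivAt {ι : Type*} [Fintype ι] {w : ι → ℝ}
    (hw : ∀ i, 0 ≤ w i) {f f' : ι → ℝ → ℝ} {a b C : ℝ} (hab : a ≤ b)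
    (hf : ∀ i, ∀ u ∈ Set.Icc a b, HasDerivAt (f i) (f' i u) u)
    (bound : ∀ u ∈ Set.Ico a b, ∑ i, w i * |f' i u| ≤ C) :
    ∑ i, w i * |f i b - f i a| ≤ C * (b - a) := by
  set σ : ι → ℝ := fun i => SignType.sign (f i b - f i a)
  have hsigned_deriv : ∀ u ∈ Set.Icc a b,
      HasDerivAt (fun v => ∑ i, w i * σ i * f i v) (∑ i, w i * σ i * f' i u) u :=
    fun u hu => HasDerivAt.fun_sum fun i _ => (hf i u hu).const_mul _
  have hsigned_deriv_le : ∀ u ∈ Set.Ico a b, ‖∑ i, w i * σ i * f' i u‖ ≤ C := by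
    intro u hu
    refine (norm_sum_le _ _).trans (le_trans (sum_le_sum fun i _ => ?_) (bound u hu))
    have hσ : |(SignType.sign (f i b - f i a) : ℝ)| ≤ 1 := by
      generalize SignType.sign (f i b - f i a) = e
      rcases e with _ | _ | _ <;> simp
    rw [Real.norm_eq_abs, abs_mul, abs_mul, abs_of_nonneg (hw i), mul_assoc]
    exact mul_le_mul_of_nonneg_left (mul_le_of_le_one_left (abs_nonneg _) hσ) (hw i)
  have hmvt := norm_image_sub_le_of_norm_deriv_le_segment'
    (fun u hu => (hsigned_deriv u hu).hasDerivWithinAt) hsigned_deriv_le b ⟨hab, le_rfl⟩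
  calc ∑ i, w i * |f i b - f i a|
      = ∑ i, w i * σ i * f i b - ∑ i, w i * σ i * f i a := by
        rw [← sum_sub_distrib]
        exact sum_congr rfl fun i _ => by rw [← sign_mul_self]; ring
    _ ≤ C * (b - a) := (le_abs_self _).trans hmvt

theorem sum_mul_abs_sum_mul_le {ι κ : Type*} [Fintype ι] [Fintype κ] {w : ι → ℝ}
    (hw : ∀ i, 0 ≤ w i) {p : κ → ι → ℝ} (hp : ∀ z i, 0 ≤ p z i) (r : κ → ℝ) :
    ∑ i, w i * |∑ z, p z i * r z| ≤ ∑ z, (∑ i, w i * p z i) * |r z| := by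
  calc ∑ i, w i * |∑ z, p z i * r z|
      ≤ ∑ i, w i * ∑ z, p z i * |r z| := by
        gcongr with i _
        · exact hw i
        · refine (abs_sum_le_sum_abs _ _).trans_eq (sum_congr rfl fun z _ => ?_)
          rw [abs_mul, abs_of_nonneg (hp z i)]
    _ = ∑ z, (∑ i, w i * p z i) * |r z| := by
        simp only [mul_sum, sum_mul, mul_assoc]
        exact sum_comm

theorem bddAbove_image_sum_mul_abs {κ : Type*} [Fintype κ] {K : Set ℝ} (hK : IsCompact K)
    {p : κ → ℝ → ℝ} (hp : ∀ z, ContinuousOn (p z) K) (hp0 : ∀ z, ∀ u ∈ K, 0 ≤ p z u)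
    {r : ℝ → κ → ℝ} {L : ℝ} (hr : ∀ u ∈ K, ∀ z, |r u z| ≤ L) :
    BddAbove ((fun u => ∑ z, p z u * |r u z|) '' K) := by
  obtain ⟨M, hM⟩ := hK.bddAbove_image
    (continuousOn_finsetSum univ fun z _ => (hp z).mul continuousOn_const :
      ContinuousOn (fun u => ∑ z, p z u * L) K)
  refine ⟨M, ?_⟩
  rintro _ ⟨u, hu, rfl⟩
  exact (sum_le_sum fun z _ => mul_le_mul_of_nonneg_left (hr u hu z) (hp0 z u hu)).trans
    (hM ⟨u, hu, rfl⟩)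

theorem le_biSup_of_bddAbove_image {α β : Type*} [ConditionallyCompleteLattice α]
    {f : β → α} {s : Set β} (hf : BddAbove (f '' s)) {c : β} (hc : c ∈ s) :
    f c ≤ ⨆ i ∈ s, f i :=
  le_ciSup₂ (f := fun i (_ : i ∈ s) => f i)
    (hf.mono <| by
      simp only [Set.iUnion_subset_iff, Set.range_subset_iff]
      exact fun i hi => ⟨i, hi, rfl⟩) c hc

theorem expected_kernel_difference_bound_general {X : Type*} [Fintype X]
    (s t L : ℝ) (hst : s ≤ t)
    (q0 : X → ℝ) (cond : ℝ → X → X → ℝ) (R : ℝ → X → X → ℝ) (x : X)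
    (hq0nonneg : ∀ x0, 0 ≤ q0 x0)
    (hcondnonneg : ∀ u y x0, 0 ≤ cond u y x0)
    (hRbound : ∀ u ∈ Set.Icc s t, ∀ y z : X, |R u y z| ≤ L)
    (hode : ∀ x0 y, ∀ u ∈ Set.Icc s t,
      HasDerivAt (fun v => cond v y x0) (∑ z, cond u z x0 * R u z y) u)
    (hpos : 0 < ∑ x0, q0 x0 * cond t x x0) :
    (1 / (∑ x0, q0 x0 * cond t x x0)) *
        ∑ x0, q0 x0 * |cond t x x0 - cond s x x0| ≤
      (t - s) * ⨆ u ∈ Set.Icc s t,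
        ∑ z, ((∑ x0, q0 x0 * cond u z x0) / (∑ x0, q0 x0 * cond t x x0)) *
          |R u z x| := by
  set Q := ∑ x0, q0 x0 * cond t x x0
  set S := ⨆ u ∈ Set.Icc s t, ∑ z, ((∑ x0, q0 x0 * cond u z x0) / Q) * |R u z x|
  have hmarginal_cont : ∀ z, ContinuousOn (fun u => (∑ x0, q0 x0 * cond u z x0) / Q)
      (Set.Icc s t) := fun z =>
    (continuousOn_finsetSum univ fun x0 _ => continuousOn_const.mul
      (continuousOn_of_forall_continuousAt fun u hu => (hode x0 z u hu).continuousAt)).div_const Q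
  -- A real `⨆` of an unbounded family is junk, so `S` dominates each term only once the family is bounded above.
  have hbdd := bddAbove_image_sum_mul_abs isCompact_Icc hmarginal_cont
    (fun z u _ => div_nonneg (sum_nonneg fun x0 _ => mul_nonneg (hq0nonneg x0)
      (hcondnonneg u z x0)) hpos.le) (fun u hu z => hRbound u hu z x)
  have hderiv_bound : ∀ u ∈ Set.Icc s t,
      ∑ x0, q0 x0 * |∑ z, cond u z x0 * R u z x| ≤ Q * S := by
    intro u hu
    calc ∑ x0, q0 x0 * |∑ z, cond u z x0 * R u z x|
        ≤ ∑ z, (∑ x0, q0 x0 * cond u z x0) * |R u z x| :=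
          sum_mul_abs_sum_mul_le hq0nonneg (fun z x0 => hcondnonneg u z x0) _
      _ = Q * ∑ z, ((∑ x0, q0 x0 * cond u z x0) / Q) * |R u z x| := by
          rw [mul_sum]
          exact sum_congr rfl fun z _ => by field_simp
      _ ≤ Q * S := mul_le_mul_of_nonneg_left (le_biSup_of_bddAbove_image hbdd hu) hpos.le
  have hmvt := sum_mul_abs_sub_le_of_hasDerivAt hq0nonneg hst (fun x0 u hu => hode x0 x u hu)
    fun u hu => hderiv_bound u (Set.Ico_subset_Icc_self hu)
  rw [one_div, inv_mul_le_iff₀ hpos]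
  linarith

/-- Expectation-level bound (Lemma 6): for a CTMC with rates bounded by `L` and
Kolmogorov forward equations for the conditional kernels, for any initial distribution
`q0` and state `x` with positive marginal `q_t(x)`,
`(1/q_t(x))·E_{x₀∼q₀}|q_{t|0}(x|x₀) − q_{s|0}(x|x₀)|
  ≤ (t−s)·sup_{u∈[s,t]} ∑_{x̃} (q_u(x̃)/q_t(x))·|R_u(x̃,x)|`. -/
theorem expected_kernel_difference_bound {X : Type*} [Fintype X]
    (s t L : ℝ) (hst : s ≤ t) (hL : 0 ≤ L)
    (q0 : X → ℝ) (cond : ℝ → X → X → ℝ) (R : ℝ → X → X → ℝ) (x : X)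
    (hq0nonneg : ∀ x0, 0 ≤ q0 x0) (hq0sum : ∑ x0, q0 x0 = 1)
    (hcondnonneg : ∀ u y x0, 0 ≤ cond u y x0)
    (hRbound : ∀ u ∈ Set.Icc s t, ∀ y z : X, |R u y z| ≤ L)
    (hode : ∀ x0 y, ∀ u ∈ Set.Icc s t,
      HasDerivAt (fun v => cond v y x0) (∑ z, cond u z x0 * R u z y) u)
    (hpos : 0 < ∑ x0, q0 x0 * cond t x x0) :
    (1 / (∑ x0, q0 x0 * cond t x x0)) *
        ∑ x0, q0 x0 * |cond t x x0 - cond s x x0| ≤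
      (t - s) * ⨆ u ∈ Set.Icc s t,
        ∑ z, ((∑ x0, q0 x0 * cond u z x0) / (∑ x0, q0 x0 * cond t x x0)) *
          |R u z x| :=
  expected_kernel_difference_bound_general s t L hst q0 cond R x hq0nonneg hcondnonneg hRbound hode
    hpos
end
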